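/- For any r ∈ k, the deconcatenation coproduct Δ is multiplicative for the interpolated product: Δ(w₁ ∗_r w₂) = Δ(w₁) ∗_r Δ(w₂) for all words w₁, w₂, so (k⟨A⟩, ∗_r, Δ) is a bialgebra. -/

import Mathlib

/-!
Quasi-shuffle algebras (Hoffman–Ihara).  We model the span `kA` of the alphabet
(with its commutative associative product `⋄`, written `*` in `L`) as a
non-unital commutative `k`-algebra `L`, and the word algebra `k⟨A⟩` as the
tensor algebra `TensorAlgebra k L`, in which a word `a₁⋯aₙ` is the product
`ι a₁ * ⋯ * ι aₙ`.
-/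

open TensorAlgebra

variable (k : Type*) [Field k]
variable {L : Type*} [NonUnitalCommRing L] [Module k L]
  [SMulCommClass k L L] [IsScalarTower k L L]

/-- The word `a₁⋯aₙ` as an element of the tensor algebra. -/
def word (l : List L) : TensorAlgebra k L := (l.map fun a => TensorAlgebra.ι k a).prod

/-- The `⋄`-product of the letters of a nonempty block (junk value `0` on `[]`). -/
def blockProd : List L → L
  | [] => 0
  | a :: t => t.foldl (· * ·) a

/-- The Hoffman–Ihara operator `Ψ_f` on words, for `f = c₁t + c₂t² + ⋯`:
`Ψ_f(w) = Σ_{(i₁,…,i_m) composition of ℓ(w)} c_{i₁}⋯c_{i_m} I[w]`,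
written via the recursion on the first block. -/
def psi (c : ℕ → k) : List L → TensorAlgebra k L
  | [] => 1
  | a :: w => ∑ j ∈ Finset.range (w.length + 1),
      c (j + 1) • (TensorAlgebra.ι k (blockProd (a :: w.take j)) * psi c (w.drop j))
  termination_by l => l.length
  decreasing_by simp [List.length_drop] <;> omega

/-!
Let `λ_a` be left multiplication by the letter `a` on the first tensor factor. Deconcatenation
satisfies `Δ(a z) = 1 ⊗ a z + λ_a Δ(z)` and, since `D c` only changes the first letter,
`Δ(D c z) = 1 ⊗ D c z + (D c ⊗ id) Δ(z)`. The recursion for `∗_r` only involves the first letters,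
so the componentwise product on the tensor square satisfies the same recursion with `λ_a` in place
of left multiplication by `a`. Expanding `Δ(a v ∗_r b w)` by the recursion and the two rules above,
the induction hypotheses for `(v, b w)`, `(a v, w)` and `(v, w)` match it term by term with
`Δ(a v) ∗_r Δ(b w)`. Words span `k⟨A⟩`, so the identity extends bilinearly.
-/

section

omit [SMulCommClass k L L] [IsScalarTower k L L]

open TensorProduct LinearMap

local notation "A" => TensorAlgebra k L

theorem LinearMap.lTensor_rTensor_comm_apply {R M N P Q : Type*} [CommSemiring R]
    [AddCommMonoid M] [AddCommMonoid N] [AddCommMonoid P] [AddCommMonoid Q]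
    [Module R M] [Module R N] [Module R P] [Module R Q]
    (f : M →ₗ[R] N) (g : P →ₗ[R] Q) (x : M ⊗[R] P) :
    g.lTensor N (f.rTensor P x) = f.rTensor Q (g.lTensor M x) := by
  rw [← comp_apply, lTensor_comp_rTensor, ← rTensor_comp_lTensor, comp_apply]

theorem word_nil : word k ([] : List L) = 1 := rfl

theorem word_cons (a : L) (u : List L) : word k (a :: u) = ι k a * word k u := List.prod_cons

theorem range_word :
    Set.range (word k : List L → A) =
      (Submonoid.closure (Set.range (ι k : L →ₗ[k] A)) : Set A) := by
  rw [← FreeMonoid.mrange_lift, MonoidHom.coe_mrange, ← FreeMonoid.ofList.surjective.range_comp]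
  congr 1 with l
  exact (FreeMonoid.lift_apply _ _).symm

theorem span_range_word : Submodule.span k (Set.range (word k : List L → A)) = ⊤ := by
  rw [range_word, ← Algebra.adjoin_eq_span, adjoin_range_ι, Algebra.top_toSubmodule]

variable {k}

theorem linearMap_ext_word {M : Type*} [AddCommMonoid M] [Module k M] {f g : A →ₗ[k] M}
    (h : ∀ w : List L, f (word k w) = g (word k w)) : f = g :=
  ext_on_range (span_range_word k) h

def IsDeconcatenation (Δ : A →ₗ[k] A ⊗[k] A) : Prop :=
  ∀ w : List L,
    Δ (word k w) = ∑ i ∈ Finset.range (w.length + 1), word k (w.take i) ⊗ₜ[k] word k (w.drop i)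

structure IsFirstLetterMul (D : L → A →ₗ[k] A) : Prop where
  apply_one : ∀ a, D a 1 = 0
  apply_ι_mul_word : ∀ (a c : L) (u : List L), D a (ι k c * word k u) = ι k (a * c) * word k u

structure IsInterpolatedProduct (r : k) (D : L → A →ₗ[k] A) (mr : A →ₗ[k] A →ₗ[k] A) : Prop where
  one_left : ∀ x, mr 1 x = x
  one_right : ∀ x, mr x 1 = x
  word_cons_cons : ∀ (a b : L) (v w : List L),
    mr (word k (a :: v)) (word k (b :: w))
      = ι k a * mr (word k v) (word k (b :: w)) + ι k b * mr (word k (a :: v)) (word k w)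
        + (1 - 2 * r) • (ι k (a * b) * mr (word k v) (word k w))
        + (r ^ 2 - r) • D (a * b) (mr (word k v) (word k w))

def IsComponentwise (mr : A →ₗ[k] A →ₗ[k] A) (mrT : A ⊗[k] A →ₗ[k] A ⊗[k] A →ₗ[k] A ⊗[k] A) :
    Prop :=
  ∀ x₁ x₂ y₁ y₂ : A, mrT (x₁ ⊗ₜ[k] x₂) (y₁ ⊗ₜ[k] y₂) = mr x₁ y₁ ⊗ₜ[k] mr x₂ y₂

variable {r : k} {D : L → TensorAlgebra k L →ₗ[k] TensorAlgebra k L}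
  {mr : TensorAlgebra k L →ₗ[k] TensorAlgebra k L →ₗ[k] TensorAlgebra k L}
  {mrT : TensorAlgebra k L ⊗[k] TensorAlgebra k L →ₗ[k] TensorAlgebra k L ⊗[k] TensorAlgebra k L
      →ₗ[k] TensorAlgebra k L ⊗[k] TensorAlgebra k L}
  {Δ : TensorAlgebra k L →ₗ[k] TensorAlgebra k L ⊗[k] TensorAlgebra k L}

namespace IsDeconcatenation

theorem map_one (hΔ : IsDeconcatenation Δ) : Δ 1 = (1 : A) ⊗ₜ[k] (1 : A) := by
  simpa [word_nil] using hΔ []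

theorem map_word_cons (hΔ : IsDeconcatenation Δ) (a : L) (u : List L) :
    Δ (word k (a :: u)) = (1 : A) ⊗ₜ[k] word k (a :: u) +
      ∑ i ∈ Finset.range (u.length + 1), word k (a :: u.take i) ⊗ₜ[k] word k (u.drop i) := by
  rw [hΔ, List.length_cons, Finset.sum_range_succ', add_comm]
  simp only [List.take_succ_cons, List.drop_succ_cons, List.take_zero, List.drop_zero, word_nil]

theorem map_ι_mul (hΔ : IsDeconcatenation Δ) (a : L) (z : A) :
    Δ (ι k a * z) = (1 : A) ⊗ₜ[k] (ι k a * z) + (mulLeft k (ι k a)).rTensor A (Δ z) := by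
  suffices Δ ∘ₗ mulLeft k (ι k a) =
      mk k A A 1 ∘ₗ mulLeft k (ι k a) + (mulLeft k (ι k a)).rTensor A ∘ₗ Δ by
    simpa using LinearMap.congr_fun this z
  refine linearMap_ext_word fun w => ?_
  simp only [comp_apply, LinearMap.add_apply, mk_apply, mulLeft_apply]
  rw [← word_cons, hΔ.map_word_cons, hΔ w]
  simp [map_sum, word_cons]

theorem map_firstLetterMul (hΔ : IsDeconcatenation Δ) (hD : IsFirstLetterMul D) (c : L) (z : A) :
    Δ (D c z) = (1 : A) ⊗ₜ[k] D c z + (D c).rTensor A (Δ z) := by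
  suffices Δ ∘ₗ D c = mk k A A 1 ∘ₗ D c + (D c).rTensor A ∘ₗ Δ by
    simpa using LinearMap.congr_fun this z
  have hD_word_cons (e : L) (u : List L) : D c (word k (e :: u)) = word k (c * e :: u) := by
    simp [word_cons, hD.apply_ι_mul_word]
  refine linearMap_ext_word fun w => ?_
  rcases w with _ | ⟨e, u⟩
  · simp [word_nil, hD.apply_one, hΔ.map_one]
  · simp [hD_word_cons, hΔ.map_word_cons, map_sum, hD.apply_one]

end IsDeconcatenation

theorem IsInterpolatedProduct.ι_mul_ι_mul (hmr : IsInterpolatedProduct r D mr) (a b : L)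
    (x y : A) :
    mr (ι k a * x) (ι k b * y)
      = ι k a * mr x (ι k b * y) + ι k b * mr (ι k a * x) y
        + (1 - 2 * r) • (ι k (a * b) * mr x y) + (r ^ 2 - r) • D (a * b) (mr x y) := by
  suffices mr.compl₁₂ (mulLeft k (ι k a)) (mulLeft k (ι k b))
      = (mr.compl₂ (mulLeft k (ι k b))).compr₂ (mulLeft k (ι k a))
        + (mr ∘ₗ mulLeft k (ι k a)).compr₂ (mulLeft k (ι k b))
        + (1 - 2 * r) • mr.compr₂ (mulLeft k (ι k (a * b))) + (r ^ 2 - r) • mr.compr₂ (D (a * b)) by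
    simpa using LinearMap.congr_fun₂ this x y
  refine linearMap_ext_word fun v => linearMap_ext_word fun w => ?_
  simpa [← word_cons] using hmr.word_cons_cons a b v w

namespace IsComponentwise

theorem apply_one_tmul (hmrT : IsComponentwise mr mrT) (h1 : ∀ x, mr 1 x = x) (x : A) :
    mrT ((1 : A) ⊗ₜ[k] x) = (mr x).lTensor A :=
  TensorProduct.ext' fun p q => by rw [hmrT, h1, lTensor_tmul]

theorem apply_tmul_one (hmrT : IsComponentwise mr mrT) (h1 : ∀ x, mr x 1 = x) (s : A ⊗[k] A)
    (y : A) : mrT s ((1 : A) ⊗ₜ[k] y) = (mr.flip y).lTensor A s := by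
  induction s using TensorProduct.induction_on with
  | zero => simp
  | tmul p q => rw [hmrT, h1, lTensor_tmul, flip_apply]
  | add s t hs ht => rw [map_add, LinearMap.add_apply, hs, ht, map_add]

theorem one_mul (hmrT : IsComponentwise mr mrT) (h1 : ∀ x, mr 1 x = x) (t : A ⊗[k] A) :
    mrT ((1 : A) ⊗ₜ[k] (1 : A)) t = t := by
  rw [hmrT.apply_one_tmul h1, show mr 1 = LinearMap.id from LinearMap.ext h1, lTensor_id, id_apply]

theorem mul_one (hmrT : IsComponentwise mr mrT) (h1 : ∀ x, mr x 1 = x) (s : A ⊗[k] A) :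
    mrT s ((1 : A) ⊗ₜ[k] (1 : A)) = s := by
  rw [hmrT.apply_tmul_one h1, show mr.flip 1 = LinearMap.id from LinearMap.ext h1, lTensor_id,
    id_apply]

theorem rTensor_mulLeft_rTensor_mulLeft (hmrT : IsComponentwise mr mrT)
    (hmr : IsInterpolatedProduct r D mr) (a b : L) (s t : A ⊗[k] A) :
    mrT ((mulLeft k (ι k a)).rTensor A s) ((mulLeft k (ι k b)).rTensor A t)
      = (mulLeft k (ι k a)).rTensor A (mrT s ((mulLeft k (ι k b)).rTensor A t))
        + (mulLeft k (ι k b)).rTensor A (mrT ((mulLeft k (ι k a)).rTensor A s) t)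
        + (1 - 2 * r) • (mulLeft k (ι k (a * b))).rTensor A (mrT s t)
        + (r ^ 2 - r) • (D (a * b)).rTensor A (mrT s t) := by
  induction s using TensorProduct.induction_on with
  | zero => simp
  | add s₁ s₂ h₁ h₂ => simp only [map_add, LinearMap.add_apply, h₁, h₂, smul_add]; abel
  | tmul x₁ x₂ =>
    induction t using TensorProduct.induction_on with
    | zero => simp
    | add t₁ t₂ h₁ h₂ => simp only [map_add, h₁, h₂, smul_add]; abel
    | tmul y₁ y₂ =>
      simp only [rTensor_tmul, mulLeft_apply, hmrT _ _ _ _, hmr.ι_mul_ι_mul, add_tmul, smul_tmul']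

end IsComponentwise

namespace IsDeconcatenation

theorem map_mr_ι_mul_ι_mul (hΔ : IsDeconcatenation Δ) (hD : IsFirstLetterMul D)
    (hmr : IsInterpolatedProduct r D mr) (hmrT : IsComponentwise mr mrT) {a b : L} {x y : A}
    (hx : Δ (mr x (ι k b * y)) = mrT (Δ x) (Δ (ι k b * y)))
    (hy : Δ (mr (ι k a * x) y) = mrT (Δ (ι k a * x)) (Δ y))
    (hxy : Δ (mr x y) = mrT (Δ x) (Δ y)) :
    Δ (mr (ι k a * x) (ι k b * y)) = mrT (Δ (ι k a * x)) (Δ (ι k b * y)) := by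
  simp only [hmr.ι_mul_ι_mul, map_add, map_smul, hΔ.map_ι_mul, hΔ.map_firstLetterMul hD,
    hx, hy, hxy, LinearMap.add_apply, smul_add, hmrT.rTensor_mulLeft_rTensor_mulLeft hmr,
    hmrT.apply_one_tmul hmr.one_left, hmrT.apply_tmul_one hmr.one_right,
    LinearMap.lTensor_rTensor_comm_apply, lTensor_tmul, tmul_add, tmul_smul]
  abel

theorem map_mr_word_word (hΔ : IsDeconcatenation Δ) (hD : IsFirstLetterMul D)
    (hmr : IsInterpolatedProduct r D mr) (hmrT : IsComponentwise mr mrT) (u w : List L) :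
    Δ (mr (word k u) (word k w)) = mrT (Δ (word k u)) (Δ (word k w)) := by
  induction u generalizing w with
  | nil => rw [word_nil, hmr.one_left, hΔ.map_one, hmrT.one_mul hmr.one_left]
  | cons a v ihv =>
    induction w with
    | nil => rw [word_nil, hmr.one_right, hΔ.map_one, hmrT.mul_one hmr.one_right]
    | cons b w ihw =>
      have hvbw := ihv (b :: w)
      simp only [word_cons] at ihw hvbw ⊢
      exact hΔ.map_mr_ι_mul_ι_mul hD hmr hmrT hvbw ihw (ihv w)

end IsDeconcatenation

end

open TensorProduct in
/--
For the interpolated product `∗_r` (the `k`-bilinear product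
`mr` with unit `1` satisfying the interpolated quasi-shuffle recursion), the
deconcatenation coproduct `Δ` is multiplicative:
`Δ(w₁ ∗_r w₂) = Δ(w₁) ∗_r Δ(w₂)`, where the tensor square carries the
componentwise product `∗_r`; so `(k⟨A⟩, ∗_r, Δ)` is a bialgebra.
-/
theorem stmt10 (r : k)
    (D : L → TensorAlgebra k L →ₗ[k] TensorAlgebra k L)
    (hD1 : ∀ a : L, D a 1 = 0)
    (hDw : ∀ (a c : L) (u : List L),
      D a (TensorAlgebra.ι k c * word k u) = TensorAlgebra.ι k (a * c) * word k u)
    (mr : TensorAlgebra k L →ₗ[k] TensorAlgebra k L →ₗ[k] TensorAlgebra k L)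
    (hmrl : ∀ x, mr 1 x = x) (hmrr : ∀ x, mr x 1 = x)
    (hmrrec : ∀ (a b : L) (v w : List L),
      mr (word k (a :: v)) (word k (b :: w))
        = TensorAlgebra.ι k a * mr (word k v) (word k (b :: w))
          + TensorAlgebra.ι k b * mr (word k (a :: v)) (word k w)
          + (1 - 2 * r) • (TensorAlgebra.ι k (a * b) * mr (word k v) (word k w))
          + (r ^ 2 - r) • D (a * b) (mr (word k v) (word k w)))
    (Δ : TensorAlgebra k L →ₗ[k] TensorAlgebra k L ⊗[k] TensorAlgebra k L)
    (hΔ : ∀ w : List L,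
      Δ (word k w) = ∑ i ∈ Finset.range (w.length + 1),
        word k (w.take i) ⊗ₜ[k] word k (w.drop i))
    (mrT : TensorAlgebra k L ⊗[k] TensorAlgebra k L →ₗ[k]
      TensorAlgebra k L ⊗[k] TensorAlgebra k L →ₗ[k]
      TensorAlgebra k L ⊗[k] TensorAlgebra k L)
    (hmrT : ∀ x₁ x₂ y₁ y₂ : TensorAlgebra k L,
      mrT (x₁ ⊗ₜ[k] x₂) (y₁ ⊗ₜ[k] y₂) = mr x₁ y₁ ⊗ₜ[k] mr x₂ y₂) :
    ∀ x y : TensorAlgebra k L, Δ (mr x y) = mrT (Δ x) (Δ y) := by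
  have hmul : mr.compr₂ Δ = mrT.compl₁₂ Δ Δ :=
    linearMap_ext_word fun u => linearMap_ext_word fun w =>
      IsDeconcatenation.map_mr_word_word hΔ ⟨hD1, hDw⟩ ⟨hmrl, hmrr, hmrrec⟩ hmrT u w
  intro x y
  simpa using LinearMap.congr_fun₂ hmul x y
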